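/- If w = T_{i_1}^{m_1} ⋯ T_{i_ℓ}^{m_ℓ} is the canonical form of a fully commutative element of S_{n+1} (with i_j ≤ m_j, i_1 < ⋯ < i_ℓ, m_1 < ⋯ < m_ℓ), then the Coxeter length of w equals ℓ + Σ_{j=1}^{ℓ} (m_j − i_j), i.e., the expression T_{i_1}^{m_1} ⋯ T_{i_ℓ}^{m_ℓ} is a reduced word. -/

import Mathlib

/-- The `i`-th simple transposition `sₙ i = (i-1, i)` in the symmetric group `S_{n+1}`
on `{0, …, n}`, for `1 ≤ i ≤ n` (and the identity otherwise).  In the usual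
`1`-based labelling this is the simple transposition `s_i` swapping `i` and `i+1`. -/
def sgen (n : ℕ) (i : ℕ) : Equiv.Perm (Fin (n + 1)) :=
  if h : 0 < i ∧ i ≤ n then Equiv.swap ⟨i - 1, by omega⟩ ⟨i, by omega⟩ else 1

/-- The segment `T_i^j = s_j s_{j-1} ⋯ s_{i+1} s_i` (the identity when `i > j`). -/
def seg (n i j : ℕ) : Equiv.Perm (Fin (n + 1)) :=
  ((List.range' i (j + 1 - i)).reverse.map (sgen n)).prod

/-- The decreasing word `[j, j-1, …, i+1, i]` spelling the segment `T_i^j`. -/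
def segWord (i j : ℕ) : List ℕ :=
  (List.range' i (j + 1 - i)).reverse

/-- The product of the word `l` of simple transpositions in `S_{n+1}`. -/
def wprod (n : ℕ) (l : List ℕ) : Equiv.Perm (Fin (n + 1)) :=
  (l.map (sgen n)).prod

/-- `l` is a reduced word for `w`: a word in the letters `1, …, n` of minimal length
whose product of simple transpositions is `w`. -/
def IsReducedWord (n : ℕ) (w : Equiv.Perm (Fin (n + 1))) (l : List ℕ) : Prop :=
  (∀ i ∈ l, 1 ≤ i ∧ i ≤ n) ∧ wprod n l = w ∧
    ∀ l' : List ℕ, (∀ i ∈ l', 1 ≤ i ∧ i ≤ n) → wprod n l' = w → l.length ≤ l'.length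

/-- `w` is fully commutative: no reduced word for `w` contains a factor `[i, i', i]`
with `|i - i'| = 1`. -/
def FullyCommutative (n : ℕ) (w : Equiv.Perm (Fin (n + 1))) : Prop :=
  ∀ l : List ℕ, IsReducedWord n w l →
    ∀ i i' : ℕ, (i + 1 = i' ∨ i' + 1 = i) → ¬ ([i, i', i] <:+: l)

/-!
The Coxeter length of a permutation of `Fin (n + 1)` is bounded below by its number of
inversions, since right multiplication by an adjacent transposition changes that number by
exactly one. The segment `T_i^m` is the cycle `i - 1 ↦ m ↦ m - 1 ↦ ⋯ ↦ i ↦ i - 1`; appended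
to a prefix `u` that is increasing from `i - 1` on, each of its `m - i + 1` letters swaps two
values in increasing order, so it adds exactly `m - i + 1` inversions, and `u T_i^m` is again
increasing from `i` on. Since `i_1 < ⋯ < i_ℓ`, induction along the canonical word shows that
its product has as many inversions as the word has letters, so the word is reduced.
-/

namespace Equiv.Perm

variable {α : Type*} [LinearOrder α]

theorem swap_lt_swap_iff_of_covBy {b c x y : α} (hbc : b ⋖ c)
    (h₁ : ¬(x = b ∧ y = c)) (h₂ : ¬(x = c ∧ y = b)) :
    swap b c x < swap b c y ↔ x < y := by
  have hb := hbc.lt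
  have hc : ∀ z, b < z → c ≤ z := fun z hz => hbc.ge_of_gt hz
  have hc' : ∀ z, z < c → z ≤ b := fun z hz => hbc.le_of_lt hz
  rw [swap_apply_def, swap_apply_def]
  split_ifs <;> grind

variable [Fintype α]

def inversions (w : Perm α) : Finset (α × α) :=
  {p | p.1 < p.2 ∧ w p.2 < w p.1}

def invCount (w : Perm α) : ℕ :=
  w.inversions.card

theorem mem_inversions {w : Perm α} {p : α × α} :
    p ∈ w.inversions ↔ p.1 < p.2 ∧ w p.2 < w p.1 := by
  simp [inversions]

theorem invCount_one : invCount (1 : Perm α) = 0 := by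
  rw [invCount, Finset.card_eq_zero, inversions, Finset.filter_eq_empty_iff]
  exact fun _ _ h => h.1.asymm h.2

theorem invCount_mul_swap_of_lt {b c : α} (hbc : b ⋖ c) (u : Perm α) (h : u b < u c) :
    invCount (u * swap b c) = invCount u + 1 := by
  set s := prodCongr (swap b c) (swap b c)
  have key : (u * swap b c).inversions = insert (b, c) (u.inversions.map s.toEmbedding) := by
    ext ⟨x, y⟩
    simp only [mem_inversions, s, Finset.mem_insert, Finset.mem_map_equiv, Perm.mul_apply,
      Prod.mk.injEq, prodCongr_symm, prodCongr_apply, symm_swap, Prod.map]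
    by_cases hxy : x = b ∧ y = c
    · simp [hxy.1, hxy.2, hbc.lt, h]
    by_cases hyx : x = c ∧ y = b
    · simp [hyx.1, hyx.2, hbc.lt.not_gt, h.not_gt, hbc.lt.ne']
    rw [swap_lt_swap_iff_of_covBy hbc hxy hyx]
    simp [hxy]
  have hnot : (b, c) ∉ u.inversions.map s.toEmbedding := by
    simp [s, Finset.mem_map_equiv, mem_inversions, hbc.lt.not_gt]
  rw [invCount, key, Finset.card_insert_of_notMem hnot, Finset.card_map, invCount]

theorem invCount_mul_swap_le {b c : α} (hbc : b ⋖ c) (u : Perm α) :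
    invCount (u * swap b c) ≤ invCount u + 1 := by
  rcases lt_or_gt_of_ne (u.injective.ne hbc.lt.ne) with h | h
  · exact (invCount_mul_swap_of_lt hbc u h).le
  · have := invCount_mul_swap_of_lt hbc (u * swap b c) (by simpa using h)
    rw [mul_assoc, swap_mul_self, mul_one] at this
    omega

end Equiv.Perm

section

open Equiv Perm

variable {n : ℕ}

theorem sgen_eq_swap {i : ℕ} (h₁ : 1 ≤ i) (h₂ : i ≤ n) :
    sgen n i = swap ⟨i - 1, by omega⟩ ⟨i, by omega⟩ :=
  dif_pos ⟨h₁, h₂⟩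

theorem Fin.mk_pred_covBy_mk {i : ℕ} (h₁ : 1 ≤ i) (h₂ : i ≤ n) :
    (⟨i - 1, by omega⟩ : Fin (n + 1)) ⋖ ⟨i, by omega⟩ := by
  rw [Fin.covBy_iff, Nat.covBy_iff_add_one_eq]
  simp only
  omega

theorem sgen_apply {i : ℕ} (h₁ : 1 ≤ i) (h₂ : i ≤ n) (x : Fin (n + 1)) :
    (sgen n i x : ℕ) = if (x : ℕ) = i - 1 then i else if (x : ℕ) = i then i - 1 else x := by
  rw [sgen_eq_swap h₁ h₂, swap_apply_def]
  split_ifs <;> simp only [Fin.ext_iff] at * <;> omega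

theorem invCount_mul_sgen_of_lt {i : ℕ} (h₁ : 1 ≤ i) (h₂ : i ≤ n) (u : Perm (Fin (n + 1)))
    (hu : u ⟨i - 1, by omega⟩ < u ⟨i, by omega⟩) :
    invCount (u * sgen n i) = invCount u + 1 := by
  rw [sgen_eq_swap h₁ h₂, invCount_mul_swap_of_lt (Fin.mk_pred_covBy_mk h₁ h₂) u hu]

theorem invCount_mul_sgen_le (u : Perm (Fin (n + 1))) (i : ℕ) :
    invCount (u * sgen n i) ≤ invCount u + 1 := by
  by_cases h : 1 ≤ i ∧ i ≤ n
  · rw [sgen_eq_swap h.1 h.2]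
    exact invCount_mul_swap_le (Fin.mk_pred_covBy_mk h.1 h.2) u
  · rw [sgen, dif_neg (by omega), mul_one]
    omega

theorem wprod_append (l₁ l₂ : List ℕ) : wprod n (l₁ ++ l₂) = wprod n l₁ * wprod n l₂ := by
  simp [wprod]

theorem invCount_wprod_le (l : List ℕ) : invCount (wprod n l) ≤ l.length := by
  induction l using List.reverseRecOn with
  | nil => simp [wprod, invCount_one]
  | append_singleton l i ih =>
    calc invCount (wprod n (l ++ [i])) = invCount (wprod n l * sgen n i) := by
          simp [wprod]
      _ ≤ invCount (wprod n l) + 1 := invCount_mul_sgen_le _ i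
      _ ≤ (l ++ [i]).length := by simpa using ih

theorem isReducedWord_of_invCount_eq_length {l : List ℕ} (hl : ∀ i ∈ l, 1 ≤ i ∧ i ≤ n)
    (h : invCount (wprod n l) = l.length) : IsReducedWord n (wprod n l) l := by
  refine ⟨hl, rfl, fun l' _ hl' => ?_⟩
  rw [← h, ← hl']
  exact invCount_wprod_le l'

theorem segWord_length (i m : ℕ) : (segWord i m).length = m + 1 - i := by
  simp [segWord]

theorem mem_segWord {i m x : ℕ} : x ∈ segWord i m ↔ i ≤ x ∧ x ≤ m := by
  simp only [segWord, List.mem_reverse, List.mem_range'_1]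
  omega

theorem wprod_segWord (i m : ℕ) : wprod n (segWord i m) = seg n i m := rfl

theorem seg_eq_seg_succ_mul_sgen {i m : ℕ} (h : i ≤ m) :
    seg n i m = seg n (i + 1) m * sgen n i := by
  have : segWord i m = segWord (i + 1) m ++ [i] := by
    rw [segWord, segWord, show m + 1 - i = (m + 1 - (i + 1)) + 1 by omega, List.range'_succ,
      List.reverse_cons]
  rw [← wprod_segWord, this, wprod_append, wprod_segWord]
  simp [wprod]

theorem seg_succ_self (m : ℕ) : seg n (m + 1) m = 1 := by
  simp [seg]

theorem seg_apply {i m : ℕ} (h₁ : 1 ≤ i) (h₂ : i ≤ m + 1) (h₃ : m ≤ n) (x : Fin (n + 1)) :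
    (seg n i m x : ℕ) =
      if (x : ℕ) = i - 1 then m else if i ≤ (x : ℕ) ∧ (x : ℕ) ≤ m then (x : ℕ) - 1 else x := by
  induction h₂ using Nat.decreasingInduction generalizing x with
  | self =>
    rw [seg_succ_self, Perm.one_apply]
    split_ifs <;> omega
  | of_succ i hi ih =>
    rw [seg_eq_seg_succ_mul_sgen (by omega), Perm.mul_apply, ih (by omega),
      sgen_apply h₁ (by omega)]
    split_ifs <;> omega

theorem seg_apply_of_lt {i m : ℕ} (h₁ : 1 ≤ i) (h₂ : i ≤ m + 1) (h₃ : m ≤ n) {x : Fin (n + 1)}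
    (hx : (x : ℕ) + 1 < i) : seg n i m x = x :=
  Fin.ext (by rw [seg_apply h₁ h₂ h₃]; split_ifs <;> omega)

theorem seg_apply_of_succ_eq {i m : ℕ} (h₁ : 1 ≤ i) (h₂ : i ≤ m + 1) (h₃ : m ≤ n)
    {x : Fin (n + 1)} (hx : (x : ℕ) + 1 = i) : seg n i m x = ⟨m, by omega⟩ :=
  Fin.ext <| (seg_apply h₁ h₂ h₃ x).trans (by rw [if_pos (by omega)])

theorem invCount_mul_seg {i m : ℕ} (h₁ : 1 ≤ i) (h₂ : i ≤ m + 1) (h₃ : m ≤ n)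
    (u : Perm (Fin (n + 1))) (hu : StrictMonoOn u {x | i - 1 ≤ (x : ℕ) ∧ (x : ℕ) ≤ m}) :
    invCount (u * seg n i m) = invCount u + (m + 1 - i) := by
  induction h₂ using Nat.decreasingInduction with
  | self => simp [seg_succ_self]
  | of_succ i hi ih =>
    have hv := ih (by omega) (hu.mono fun x hx => ⟨by simp only [Set.mem_ofPred_eq] at hx ⊢; omega, hx.2⟩)
    have hfixed : seg n (i + 1) m ⟨i - 1, by omega⟩ = ⟨i - 1, by omega⟩ :=
      seg_apply_of_lt (by omega) (by omega) h₃ (by simp only; omega)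
    have hmoved : seg n (i + 1) m ⟨i, by omega⟩ = ⟨m, by omega⟩ :=
      seg_apply_of_succ_eq (by omega) (by omega) h₃ rfl
    have hlt : (u * seg n (i + 1) m) ⟨i - 1, by omega⟩ < (u * seg n (i + 1) m) ⟨i, by omega⟩ := by
      rw [Perm.mul_apply, Perm.mul_apply, hfixed, hmoved]
      exact hu ⟨le_rfl, by simp only; omega⟩ ⟨by simp only; omega, le_rfl⟩
        (Fin.mk_lt_mk.2 (by omega))
    rw [seg_eq_seg_succ_mul_sgen (by omega), ← mul_assoc,
      invCount_mul_sgen_of_lt h₁ (by omega) _ hlt, hv]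
    omega

theorem strictMonoOn_mul_seg {i m : ℕ} (h₁ : 1 ≤ i) (h₂ : i ≤ m + 1) (h₃ : m ≤ n)
    {u : Perm (Fin (n + 1))} (hu : StrictMonoOn u {x | i - 1 ≤ (x : ℕ)}) :
    StrictMonoOn (u * seg n i m) {x | i ≤ (x : ℕ)} := by
  intro x hx y hy hxy
  have hx' := seg_apply h₁ h₂ h₃ x
  have hy' := seg_apply h₁ h₂ h₃ y
  simp only [Set.mem_ofPred_eq, Fin.lt_def] at hx hy hxy
  apply hu <;> simp only [Set.mem_ofPred_eq, Fin.lt_def] <;> split_ifs at hx' hy' <;> omega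

def canonicalWord (ps : List (ℕ × ℕ)) : List ℕ :=
  (ps.map fun p => segWord p.1 p.2).flatten

theorem mem_canonicalWord {ps : List (ℕ × ℕ)} {x : ℕ} :
    x ∈ canonicalWord ps ↔ ∃ p ∈ ps, p.1 ≤ x ∧ x ≤ p.2 := by
  simp [canonicalWord, mem_segWord]

theorem canonicalWord_append_singleton (ps : List (ℕ × ℕ)) (q : ℕ × ℕ) :
    canonicalWord (ps ++ [q]) = canonicalWord ps ++ segWord q.1 q.2 := by
  simp [canonicalWord]

theorem wprod_canonicalWord_append_singleton (ps : List (ℕ × ℕ)) (q : ℕ × ℕ) :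
    wprod n (canonicalWord (ps ++ [q])) = wprod n (canonicalWord ps) * seg n q.1 q.2 := by
  rw [canonicalWord_append_singleton, wprod_append, wprod_segWord]

theorem length_canonicalWord {ps : List (ℕ × ℕ)} (h : ∀ p ∈ ps, p.1 ≤ p.2) :
    (canonicalWord ps).length = ps.length + (ps.map fun p => p.2 - p.1).sum := by
  induction ps with
  | nil => rfl
  | cons q ps ih =>
    have hq := h q (by simp)
    simp only [canonicalWord, List.map_cons, List.flatten_cons, List.length_append,
      segWord_length, List.length_cons, List.sum_cons] at ih ⊢
    rw [ih fun p hp => h p (by simp [hp])]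
    omega

theorem setOf_sub_one_le_subset {ps : List (ℕ × ℕ)} {q : ℕ × ℕ} (h : ∀ p ∈ ps, p.1 < q.1) :
    {x : Fin (n + 1) | q.1 - 1 ≤ (x : ℕ)} ⊆ {x | ∀ p ∈ ps, p.1 ≤ (x : ℕ)} := by
  intro x hx p hp
  have := h p hp
  simp only [Set.mem_ofPred_eq] at hx
  omega

theorem strictMonoOn_wprod_canonicalWord {ps : List (ℕ × ℕ)}
    (hin : ∀ p ∈ ps, 1 ≤ p.1 ∧ p.1 ≤ p.2 ∧ p.2 ≤ n) (hps : ps.Pairwise fun p q => p.1 < q.1) :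
    StrictMonoOn (wprod n (canonicalWord ps)) {x | ∀ p ∈ ps, p.1 ≤ (x : ℕ)} := by
  induction ps using List.reverseRecOn with
  | nil => simpa [canonicalWord, wprod] using strictMono_id.strictMonoOn Set.univ
  | append_singleton ps q ih =>
    rw [List.pairwise_append] at hps
    have hq := hin q (by simp)
    have hu := ih (fun p hp => hin p (by simp [hp])) hps.1
    rw [wprod_canonicalWord_append_singleton]
    have hlast : ∀ p ∈ ps, p.1 < q.1 := fun p hp => hps.2.2 p hp q (by simp)
    exact (strictMonoOn_mul_seg hq.1 (by omega) hq.2.2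
      (hu.mono (setOf_sub_one_le_subset hlast))).mono fun x hx => hx q (by simp)

theorem invCount_wprod_canonicalWord {ps : List (ℕ × ℕ)}
    (hin : ∀ p ∈ ps, 1 ≤ p.1 ∧ p.1 ≤ p.2 ∧ p.2 ≤ n) (hps : ps.Pairwise fun p q => p.1 < q.1) :
    invCount (wprod n (canonicalWord ps)) = (canonicalWord ps).length := by
  induction ps using List.reverseRecOn with
  | nil => simp [canonicalWord, wprod, invCount_one]
  | append_singleton ps q ih =>
    have hin' : ∀ p ∈ ps, 1 ≤ p.1 ∧ p.1 ≤ p.2 ∧ p.2 ≤ n := fun p hp => hin p (by simp [hp])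
    have hq := hin q (by simp)
    rw [List.pairwise_append] at hps
    have hlast : ∀ p ∈ ps, p.1 < q.1 := fun p hp => hps.2.2 p hp q (by simp)
    have hu := strictMonoOn_wprod_canonicalWord hin' hps.1
    rw [wprod_canonicalWord_append_singleton, invCount_mul_seg hq.1 (by omega) hq.2.2 _
      (hu.mono fun x hx => setOf_sub_one_le_subset hlast hx.1), ih hin' hps.1,
      canonicalWord_append_singleton, List.length_append, segWord_length]

end

/-- If `w = T_{i_1}^{m_1} ⋯ T_{i_ℓ}^{m_ℓ}` is the canonical form of a fully commutative
element of `S_{n+1}` (with `i_j ≤ m_j`, `i_1 < ⋯ < i_ℓ`, `m_1 < ⋯ < m_ℓ`), then the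
concatenated word is a reduced word for `w`; in particular the Coxeter length of `w` is
`ℓ + Σ_j (m_j − i_j)`. -/
theorem canonical_word_isReduced (n : ℕ) (ps : List (ℕ × ℕ))
    (hin : ∀ p ∈ ps, 1 ≤ p.1 ∧ p.1 ≤ p.2 ∧ p.2 ≤ n)
    (hchain : List.Chain' (fun p q => p.1 < q.1 ∧ p.2 < q.2) ps) :
    IsReducedWord n (wprod n ((ps.map (fun p => segWord p.1 p.2)).flatten))
        ((ps.map (fun p => segWord p.1 p.2)).flatten) ∧
      ((ps.map (fun p => segWord p.1 p.2)).flatten).length =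
        ps.length + (ps.map (fun p => p.2 - p.1)).sum := by
  have hps : ps.Pairwise fun p q => p.1 < q.1 :=
    List.pairwise_map.1 ((List.isChain_map Prod.fst).2 (hchain.imp fun _ _ h => h.1)).pairwise
  have hletters : ∀ i ∈ canonicalWord ps, 1 ≤ i ∧ i ≤ n := fun i hi => by
    obtain ⟨p, hp, hpi⟩ := mem_canonicalWord.1 hi
    have := hin p hp
    omega
  exact ⟨isReducedWord_of_invCount_eq_length hletters (invCount_wprod_canonicalWord hin hps),
    length_canonicalWord fun p hp => (hin p hp).2.1⟩
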